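/- Let u(μ, β) = (β − β†)^T μ − Σ_{i=1}^n [b(β^T X^{(i)}) − b(β†^T X^{(i)})] with b smooth, b'' > 0, and the matrix Σ_i X^{(i)} X^{(i)T} positive definite. Define v(μ) = sup_β u(μ, β), let β(μ) = argsup_β u(μ, β), and let μ† = Σ_i b'(β†^T X^{(i)}) X^{(i)}, so that β(μ†) = β† solves the first-order condition. Then v is twice continuously differentiable near μ†, v(μ†) = 0, ∇v(μ†) = 0, and ∇²v(μ) = [Σ_i b''(β(μ)^T X^{(i)}) X^{(i)} X^{(i)T}]^{−1}. -/

import Mathlib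

open Real
open ContDiff

open Matrix ContDiff

namespace EnvAux

variable {p n : ℕ}

noncomputable def dotCLM (c : Fin p → ℝ) : (Fin p → ℝ) →L[ℝ] ℝ :=
  ∑ j, c j • ContinuousLinearMap.proj j

lemma dotCLM_apply (c w : Fin p → ℝ) : dotCLM c w = ∑ j, c j * w j := by
  simp [dotCLM]

lemma dotCLM_single (c : Fin p → ℝ) (j : Fin p) : dotCLM c (Pi.single j 1) = c j := by
  simp [dotCLM_apply, Pi.single_apply, mul_ite, Finset.sum_ite_eq']

noncomputable def dotL : (Fin p → ℝ) →L[ℝ] ((Fin p → ℝ) →L[ℝ] ℝ) :=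
  LinearMap.toContinuousLinearMap
    { toFun := dotCLM
      map_add' := fun a c => ContinuousLinearMap.ext fun w => by
        simp [dotCLM_apply, add_mul, Finset.sum_add_distrib]
      map_smul' := fun r c => ContinuousLinearMap.ext fun w => by
        simp [dotCLM_apply, Finset.mul_sum, mul_assoc] }

lemma dotL_apply (c : Fin p → ℝ) : dotL c = dotCLM c := rfl

lemma sum_swap_mul (f : Fin n → ℝ) (X : Fin n → Fin p → ℝ) (d : Fin p → ℝ) :
    ∑ j, (∑ i, f i * X i j) * d j = ∑ i, f i * ∑ j, d j * X i j := by
  simp_rw [Finset.sum_mul, Finset.mul_sum]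
  rw [Finset.sum_comm]
  exact Finset.sum_congr rfl fun i _ => Finset.sum_congr rfl fun j _ => by ring

lemma quad_eq (c : Fin n → ℝ) (X : Fin n → Fin p → ℝ) (d : Fin p → ℝ) :
    d ⬝ᵥ ((Matrix.of fun j k => ∑ i, c i * X i j * X i k) *ᵥ d)
      = ∑ i, c i * (∑ j, d j * X i j) ^ 2 := by
  have : ∀ i, c i * (∑ j, d j * X i j) ^ 2
      = ∑ j, ∑ k, c i * X i j * X i k * d k * d j := by
    intro i
    rw [sq, Finset.sum_mul_sum, Finset.mul_sum]
    exact Finset.sum_congr rfl fun j _ => by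
      rw [Finset.mul_sum]
      exact Finset.sum_congr rfl fun k _ => by ring
  simp_rw [this, dotProduct, Matrix.mulVec, dotProduct, Matrix.of_apply,
    Finset.sum_mul, Finset.mul_sum]
  refine Eq.trans (Finset.sum_congr rfl fun j _ => Finset.sum_comm) ?_
  rw [Finset.sum_comm]
  exact Finset.sum_congr rfl fun i _ => Finset.sum_congr rfl fun j _ =>
    Finset.sum_congr rfl fun k _ => by ring

noncomputable def mEquiv (A : Matrix (Fin p) (Fin p) ℝ) (hA : IsUnit A.det) :
    (Fin p → ℝ) ≃L[ℝ] (Fin p → ℝ) :=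
  LinearEquiv.toContinuousLinearEquiv <|
    LinearEquiv.ofLinear A.mulVecLin A⁻¹.mulVecLin
      (by rw [← Matrix.mulVecLin_mul, Matrix.mul_nonsing_inv _ hA, Matrix.mulVecLin_one])
      (by rw [← Matrix.mulVecLin_mul, Matrix.nonsing_inv_mul _ hA, Matrix.mulVecLin_one])

lemma mEquiv_apply (A : Matrix (Fin p) (Fin p) ℝ) (hA : IsUnit A.det) (x : Fin p → ℝ) :
    mEquiv A hA x = A *ᵥ x := rfl

lemma mEquiv_symm_apply (A : Matrix (Fin p) (Fin p) ℝ) (hA : IsUnit A.det) (x : Fin p → ℝ) :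
    (mEquiv A hA).symm x = A⁻¹ *ᵥ x := rfl


variable (b : ℝ → ℝ) (X : Fin n → Fin p → ℝ)

noncomputable def Fm (β : Fin p → ℝ) : Fin p → ℝ :=
  fun j => ∑ i, deriv b (∑ k, β k * X i k) * X i j

noncomputable def Hm (β : Fin p → ℝ) : Matrix (Fin p) (Fin p) ℝ :=
  Matrix.of fun j k => ∑ i, deriv (deriv b) (∑ l, β l * X i l) * X i j * X i k

noncomputable def Bf (β : Fin p → ℝ) : ℝ := ∑ i, b (∑ k, β k * X i k)

lemma hasFDerivAt_lin (i : Fin n) (β : Fin p → ℝ) :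
    HasFDerivAt (fun β : Fin p → ℝ => ∑ k, β k * X i k) (dotCLM (X i)) β := by
  have h : (fun β : Fin p → ℝ => ∑ k, β k * X i k) = fun β => dotCLM (X i) β := by
    funext β; simp [dotCLM_apply, mul_comm]
  rw [h]; exact (dotCLM (X i)).hasFDerivAt

lemma contDiff_lin (i : Fin n) : ContDiff ℝ ∞ (fun β : Fin p → ℝ => ∑ k, β k * X i k) :=
  ContDiff.sum fun k _ => (contDiff_apply ℝ ℝ k).mul contDiff_const

variable (hb : ContDiff ℝ ∞ b)
include hb

lemma hasFDerivAt_Bf (β : Fin p → ℝ) :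
    HasFDerivAt (Bf b X) (dotCLM (Fm b X β)) β := by
  have h := HasFDerivAt.fun_sum (x := β) (u := Finset.univ)
    (A := fun i β => b (∑ k, β k * X i k))
    (A' := fun i => deriv b (∑ k, β k * X i k) • dotCLM (X i))
    (fun i _ => ((hb.differentiable (by norm_cast) _).hasDerivAt).comp_hasFDerivAt β
      (hasFDerivAt_lin X i β))
  refine HasFDerivAt.congr_fderiv h ?_
  ext w
  simp only [dotCLM_apply, ContinuousLinearMap.coe_sum', Finset.sum_apply,
    ContinuousLinearMap.coe_smul', Pi.smul_apply, smul_eq_mul, Fm]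
  rw [sum_swap_mul]
  exact Finset.sum_congr rfl fun i _ => by simp [dotCLM_apply, mul_comm]

lemma contDiff_Bf : ContDiff ℝ ∞ (Bf b X) :=
  ContDiff.sum fun i _ => hb.comp (contDiff_lin X i)

lemma contDiff_Fm : ContDiff ℝ ∞ (Fm b X) :=
  contDiff_pi.mpr fun j => ContDiff.sum fun i _ =>
    (((contDiff_infty_iff_deriv.mp hb).2).comp (contDiff_lin X i)).mul contDiff_const

lemma hasFDerivAt_Fm (β : Fin p → ℝ) :
    HasFDerivAt (Fm b X) (Matrix.mulVecLin (Hm b X β)).toContinuousLinearMap β := by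
  apply hasFDerivAt_pi''
  intro j
  have h := HasFDerivAt.fun_sum (x := β) (u := Finset.univ)
    (A := fun i β => deriv b (∑ k, β k * X i k) * X i j)
    (A' := fun i => X i j • (deriv (deriv b) (∑ k, β k * X i k) • dotCLM (X i)))
    (fun i _ => (((((contDiff_infty_iff_deriv.mp hb).2).differentiable (by norm_cast) _).hasDerivAt).comp_hasFDerivAt β
      (hasFDerivAt_lin X i β)).mul_const (X i j))
  refine HasFDerivAt.congr_fderiv h ?_
  symm
  ext w
  simp only [ContinuousLinearMap.coe_comp', Function.comp_apply,
    ContinuousLinearMap.coe_sum', Finset.sum_apply, ContinuousLinearMap.coe_smul', Pi.smul_apply, smul_eq_mul,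
    LinearMap.coe_toContinuousLinearMap', Matrix.mulVecLin_apply,
    ContinuousLinearMap.proj_apply, dotCLM_apply]
  rw [Matrix.mulVec, dotProduct]
  simp only [Hm, Matrix.of_apply, Finset.sum_mul]
  rw [Finset.sum_comm]
  refine Finset.sum_congr rfl fun i _ => ?_
  simp only [Finset.mul_sum]
  exact Finset.sum_congr rfl fun k _ => by ring


omit hb

lemma mono_mul_nonneg {f : ℝ → ℝ} (hf : StrictMono f) (s t : ℝ) : 0 ≤ (f s - f t) * (s - t) := by
  rcases lt_trichotomy s t with h | h | h
  · have := hf h; nlinarith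
  · simp [h]
  · have := hf h; nlinarith

lemma mono_mul_pos {f : ℝ → ℝ} (hf : StrictMono f) {s t : ℝ} (h : s ≠ t) :
    0 < (f s - f t) * (s - t) := by
  rcases h.lt_or_gt with h | h
  · have := hf h; nlinarith
  · have := hf h; nlinarith

lemma exists_lin_ne (hX : (Matrix.of fun j k : Fin p => ∑ i, X i j * X i k).PosDef)
    {d : Fin p → ℝ} (hd : d ≠ 0) : ∃ i, ∑ j, d j * X i j ≠ 0 := by
  by_contra h
  push_neg at h
  have h2 := hX.dotProduct_mulVec_pos hd
  have h3 : (Matrix.of fun j k : Fin p => ∑ i, X i j * X i k)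
      = Matrix.of fun j k => ∑ i, (fun _ : Fin n => (1 : ℝ)) i * X i j * X i k := by
    ext j k; simp
  rw [star_trivial, h3, quad_eq] at h2
  simp only [h, one_mul] at h2
  simp at h2

lemma posDef_Hm (hb'' : ∀ x, 0 < deriv (deriv b) x)
    (hX : (Matrix.of fun j k : Fin p => ∑ i, X i j * X i k).PosDef) (β : Fin p → ℝ) :
    (Hm b X β).PosDef := by
  refine Matrix.PosDef.of_dotProduct_mulVec_pos ?_ ?_
  · ext j k
    simp only [Hm, Matrix.conjTranspose_apply, Matrix.of_apply, star_trivial]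
    exact Finset.sum_congr rfl fun i _ => by ring
  · intro x hx
    rw [star_trivial]
    rw [show Hm b X β = Matrix.of fun j k =>
        ∑ i, (fun i => deriv (deriv b) (∑ l, β l * X i l)) i * X i j * X i k from rfl, quad_eq]
    obtain ⟨i0, hi0⟩ := exists_lin_ne X hX hx
    refine Finset.sum_pos' (fun i _ => mul_nonneg (hb'' _).le (sq_nonneg _)) ⟨i0,
      Finset.mem_univ i0, mul_pos (hb'' _) (by positivity)⟩

lemma injective_Fm (hb'' : ∀ x, 0 < deriv (deriv b) x)
    (hX : (Matrix.of fun j k : Fin p => ∑ i, X i j * X i k).PosDef) :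
    Function.Injective (Fm b X) := by
  have hmono : StrictMono (deriv b) := strictMono_of_deriv_pos hb''
  intro β₁ β₂ h
  by_contra hne
  have hd : β₁ - β₂ ≠ 0 := sub_ne_zero.mpr hne
  obtain ⟨i0, hi0⟩ := exists_lin_ne X hX hd
  have hlin : ∀ i, ∑ j, (β₁ - β₂) j * X i j = (∑ k, β₁ k * X i k) - ∑ k, β₂ k * X i k := by
    intro i
    rw [← Finset.sum_sub_distrib]
    exact Finset.sum_congr rfl fun j _ => by rw [Pi.sub_apply, sub_mul]
  have key : ∑ j, (Fm b X β₁ j - Fm b X β₂ j) * (β₁ - β₂) j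
      = ∑ i, (deriv b (∑ k, β₁ k * X i k) - deriv b (∑ k, β₂ k * X i k))
          * ((∑ k, β₁ k * X i k) - ∑ k, β₂ k * X i k) := by
    simp only [Fm, ← Finset.sum_sub_distrib, ← sub_mul]
    rw [sum_swap_mul]
    exact Finset.sum_congr rfl fun i _ => congrArg _ rfl
  have hz : ∑ j, (Fm b X β₁ j - Fm b X β₂ j) * (β₁ - β₂) j = 0 := by
    rw [h]; simp
  have hpos : 0 < ∑ i, (deriv b (∑ k, β₁ k * X i k) - deriv b (∑ k, β₂ k * X i k))
      * ((∑ k, β₁ k * X i k) - ∑ k, β₂ k * X i k) := by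
    refine Finset.sum_pos' (fun i _ => mono_mul_nonneg hmono _ _)
      ⟨i0, Finset.mem_univ i0, mono_mul_pos hmono ?_⟩
    rw [hlin i0] at hi0
    exact sub_ne_zero.mp hi0
  rw [key] at hz
  exact absurd hz hpos.ne'

lemma isUnit_det_Hm (hb'' : ∀ x, 0 < deriv (deriv b) x)
    (hX : (Matrix.of fun j k : Fin p => ∑ i, X i j * X i k).PosDef) (β : Fin p → ℝ) :
    IsUnit (Hm b X β).det :=
  (posDef_Hm b X hb'' hX β).det_pos.ne'.isUnit

end EnvAux

/-- Envelope/implicit-function lemma. Let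
`u(μ, β) = (β − β†)ᵀμ − ∑ᵢ [b(βᵀX⁽ⁱ⁾) − b(β†ᵀX⁽ⁱ⁾)]` with `b` smooth, `b'' > 0`, and
`∑ᵢ X⁽ⁱ⁾X⁽ⁱ⁾ᵀ` positive definite. Let `v(μ) = sup_β u(μ, β)` (attained at `β(μ)`), and
`μ† = ∑ᵢ b'(β†ᵀX⁽ⁱ⁾) X⁽ⁱ⁾`. Then `v` is twice continuously differentiable near `μ†`,
`v(μ†) = 0`, `∇v(μ†) = 0`, and near `μ†` the Hessian satisfies
`∇²v(μ) = [∑ᵢ b''(β(μ)ᵀX⁽ⁱ⁾) X⁽ⁱ⁾X⁽ⁱ⁾ᵀ]⁻¹`. -/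
theorem envelope_hessian_lemma
    (p n : ℕ) (b : ℝ → ℝ) (hb : ContDiff ℝ (⊤ : ℕ∞) b)
    (hb'' : ∀ x, 0 < deriv (deriv b) x)
    (X : Fin n → Fin p → ℝ)
    (hX : (Matrix.of fun j k : Fin p => ∑ i, X i j * X i k).PosDef)
    (βd : Fin p → ℝ)
    (u : (Fin p → ℝ) → (Fin p → ℝ) → ℝ)
    (hu : u = fun m β => ∑ j, (β j - βd j) * m j
      - ∑ i, (b (∑ j, β j * X i j) - b (∑ j, βd j * X i j)))
    (βm : (Fin p → ℝ) → (Fin p → ℝ))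
    (hmax : ∀ m β, u m β ≤ u m (βm m))
    (v : (Fin p → ℝ) → ℝ) (hv : v = fun m => u m (βm m))
    (μd : Fin p → ℝ)
    (hμd : μd = fun j => ∑ i, deriv b (∑ k, βd k * X i k) * X i j) :
    v μd = 0 ∧ fderiv ℝ v μd = 0 ∧
    ∃ ε > 0, ContDiffOn ℝ 2 v (Metric.ball μd ε) ∧
      ∀ m ∈ Metric.ball μd ε,
        (Matrix.of fun j k : Fin p =>
            iteratedFDeriv ℝ 2 v m ![Pi.single j 1, Pi.single k 1])
          = (Matrix.of fun j k : Fin p =>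
              ∑ i, deriv (deriv b) (∑ l, βm m l * X i l) * X i j * X i k)⁻¹ := by
  classical
  have hb' : ContDiff ℝ ∞ b := hb.of_le (by simp)
  have hdet : ∀ β, IsUnit (EnvAux.Hm b X β).det := EnvAux.isUnit_det_Hm b X hb'' hX
  have hFinj : Function.Injective (EnvAux.Fm b X) := EnvAux.injective_Fm b X hb'' hX
  -- first-order condition
  have hFOC : ∀ m, EnvAux.Fm b X (βm m) = m := by
    intro m
    have hud : ∀ β, HasFDerivAt (u m)
        (EnvAux.dotCLM m - EnvAux.dotCLM (EnvAux.Fm b X β)) β := by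
      intro β
      have h1 : HasFDerivAt (fun β : Fin p → ℝ => ∑ j, (β j - βd j) * m j)
          (EnvAux.dotCLM m) β := by
        have he : (fun β : Fin p → ℝ => ∑ j, (β j - βd j) * m j)
            = fun β => EnvAux.dotCLM m β - EnvAux.dotCLM m βd := by
          funext β
          simp only [EnvAux.dotCLM_apply]
          rw [← Finset.sum_sub_distrib]
          exact Finset.sum_congr rfl fun x _ => by ring
        rw [he]
        exact (EnvAux.dotCLM m).hasFDerivAt.sub_const _
      have h2 : HasFDerivAt
          (fun β : Fin p → ℝ => ∑ i, (b (∑ j, β j * X i j) - b (∑ j, βd j * X i j)))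
          (EnvAux.dotCLM (EnvAux.Fm b X β)) β := by
        have he : (fun β : Fin p → ℝ => ∑ i, (b (∑ j, β j * X i j) - b (∑ j, βd j * X i j)))
            = fun β => EnvAux.Bf b X β - EnvAux.Bf b X βd := by
          funext β; simp [EnvAux.Bf, Finset.sum_sub_distrib]
        rw [he]
        exact (EnvAux.hasFDerivAt_Bf b X hb' β).sub_const _
      rw [hu]
      exact h1.sub h2
    have hlm : IsLocalMax (u m) (βm m) := Filter.Eventually.of_forall (hmax m)
    have h0 := hlm.hasFDerivAt_eq_zero (hud (βm m))
    funext j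
    have hj : (EnvAux.dotCLM m - EnvAux.dotCLM (EnvAux.Fm b X (βm m))) (Pi.single j 1) = 0 := by
      rw [h0]; rfl
    rw [ContinuousLinearMap.sub_apply, EnvAux.dotCLM_single, EnvAux.dotCLM_single] at hj
    linarith
  have hFβd : EnvAux.Fm b X βd = μd := by rw [hμd]; rfl
  have hβμ : βm μd = βd := hFinj (by rw [hFOC μd, hFβd])
  -- regularity of βm
  have hFsm := EnvAux.contDiff_Fm b X hb'
  have hFd : ∀ β, HasFDerivAt (EnvAux.Fm b X)
      ((EnvAux.mEquiv _ (hdet β) : (Fin p → ℝ) →L[ℝ] (Fin p → ℝ))) β := by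
    intro β
    have h := EnvAux.hasFDerivAt_Fm b X hb' β
    convert h using 1
    rfl
  have hβall : ∀ m : Fin p → ℝ, ContDiffAt ℝ ∞ βm m ∧
      HasFDerivAt βm
        (((EnvAux.mEquiv _ (hdet (βm m))).symm : (Fin p → ℝ) →L[ℝ] (Fin p → ℝ))) m := by
    intro m
    set a := βm m with ha
    have hca : ContDiffAt ℝ ∞ (EnvAux.Fm b X) a := hFsm.contDiffAt
    have hS : HasStrictFDerivAt (EnvAux.Fm b X)
        ((EnvAux.mEquiv _ (hdet a) : (Fin p → ℝ) →L[ℝ] (Fin p → ℝ))) a :=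
      hca.hasStrictFDerivAt' (hFd a) (by norm_cast)
    have hev := hS.eventually_right_inverse
    have heq : hS.localInverse _ _ _ =ᶠ[nhds (EnvAux.Fm b X a)] βm :=
      hev.mono fun y hy => hFinj (by rw [hFOC y, hy])
    have hm' : EnvAux.Fm b X a = m := hFOC m
    have hCI : ContDiffAt ℝ ∞ (hS.localInverse _ _ _) (EnvAux.Fm b X a) :=
      hca.to_localInverse (f' := EnvAux.mEquiv _ (hdet a)) (hFd a) (by norm_cast)
    constructor
    · exact hm' ▸ (hCI.congr_of_eventuallyEq heq.symm)
    · have hDI := hS.to_localInverse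
      exact hm' ▸ (hDI.hasFDerivAt.congr_of_eventuallyEq heq.symm)
  have hβsm : ContDiff ℝ ∞ βm := contDiff_iff_contDiffAt.mpr fun m => (hβall m).1
  -- closed form of v
  have hvdef : v = fun m => (∑ j, (βm m j - βd j) * m j)
      - (EnvAux.Bf b X (βm m) - EnvAux.Bf b X βd) := by
    rw [hv, hu]
    funext m
    simp [EnvAux.Bf, Finset.sum_sub_distrib]
  have hvd : ∀ m, HasFDerivAt v (EnvAux.dotCLM (fun j => βm m j - βd j)) m := by
    intro m
    have hD := (hβall m).2
    have h1 : HasFDerivAt (fun m' => ∑ j, (βm m' j - βd j) * m' j)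
        (∑ j : Fin p, ((βm m j - βd j) • ContinuousLinearMap.proj j
          + m j • ((ContinuousLinearMap.proj j).comp
              (((EnvAux.mEquiv _ (hdet (βm m))).symm : (Fin p → ℝ) →L[ℝ] (Fin p → ℝ)))))) m := by
      apply HasFDerivAt.fun_sum
      intro j _
      have hc : HasFDerivAt (fun m' => βm m' j - βd j)
          ((ContinuousLinearMap.proj j).comp
            (((EnvAux.mEquiv _ (hdet (βm m))).symm : (Fin p → ℝ) →L[ℝ] (Fin p → ℝ)))) m :=
        (hasFDerivAt_pi'.mp hD j).sub_const _
      exact hc.mul (hasFDerivAt_apply j m)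
    have h2 : HasFDerivAt (fun m' => EnvAux.Bf b X (βm m'))
        ((EnvAux.dotCLM (EnvAux.Fm b X (βm m))).comp
          (((EnvAux.mEquiv _ (hdet (βm m))).symm : (Fin p → ℝ) →L[ℝ] (Fin p → ℝ)))) m :=
      (EnvAux.hasFDerivAt_Bf b X hb' (βm m)).comp m hD
    rw [hFOC m] at h2
    have h3 := h1.sub (h2.sub_const (EnvAux.Bf b X βd))
    rw [hvdef]
    refine HasFDerivAt.congr_fderiv h3 ?_
    ext w
    simp only [EnvAux.dotCLM_apply, ContinuousLinearMap.sub_apply,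
      ContinuousLinearMap.coe_sum', Finset.sum_apply, ContinuousLinearMap.add_apply,
      ContinuousLinearMap.coe_smul', Pi.smul_apply, smul_eq_mul,
      ContinuousLinearMap.coe_comp', Function.comp_apply, ContinuousLinearMap.proj_apply]
    rw [Finset.sum_add_distrib]
    ring
  have hv0 : v μd = 0 := by
    rw [hv]
    show u μd (βm μd) = 0
    rw [hβμ, hu]
    simp
  have hfv : fderiv ℝ v = fun m => EnvAux.dotCLM (fun j => βm m j - βd j) :=
    funext fun m => (hvd m).fderiv
  have hfv0 : fderiv ℝ v μd = 0 := by
    rw [hfv]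
    show EnvAux.dotCLM (fun j => βm μd j - βd j) = 0
    rw [hβμ]
    exact ContinuousLinearMap.ext fun w => by simp [EnvAux.dotCLM_apply]
  have hBsm := EnvAux.contDiff_Bf b X hb'
  have hvsm : ContDiff ℝ ∞ v := by
    rw [hvdef]
    exact (ContDiff.sum fun j _ =>
        (((contDiff_pi.mp hβsm j).sub contDiff_const).mul
          (contDiff_apply ℝ ℝ j))).sub
      ((hBsm.comp hβsm).sub contDiff_const)
  refine ⟨hv0, hfv0, 1, one_pos, (hvsm.of_le (by
    rw [show (2 : WithTop ℕ∞) = ((2 : ℕ∞) : WithTop ℕ∞) from rfl]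
    exact WithTop.coe_le_coe.mpr le_top)).contDiffOn, ?_⟩
  intro m _
  have hd2 : HasFDerivAt (fderiv ℝ v)
      (EnvAux.dotL.comp
        (((EnvAux.mEquiv _ (hdet (βm m))).symm : (Fin p → ℝ) →L[ℝ] (Fin p → ℝ)))) m := by
    rw [hfv]
    exact EnvAux.dotL.hasFDerivAt.comp m ((hβall m).2.sub_const βd)
  have hff := hd2.fderiv
  have hsymm : (EnvAux.Hm b X (βm m))ᵀ = EnvAux.Hm b X (βm m) := by
    ext j k
    simp only [Matrix.transpose_apply, EnvAux.Hm, Matrix.of_apply]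
    exact Finset.sum_congr rfl fun i _ => by ring
  have hinvT : (EnvAux.Hm b X (βm m))⁻¹ᵀ = (EnvAux.Hm b X (βm m))⁻¹ := by
    rw [Matrix.transpose_nonsing_inv, hsymm]
  ext j k
  show iteratedFDeriv ℝ 2 v m ![Pi.single j 1, Pi.single k 1] = (EnvAux.Hm b X (βm m))⁻¹ j k
  rw [iteratedFDeriv_two_apply, hff]
  simp only [Matrix.cons_val_zero, Matrix.cons_val_one, Matrix.head_cons,
    ContinuousLinearMap.coe_comp', Function.comp_apply]
  rw [EnvAux.dotL_apply, EnvAux.dotCLM_single]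
  have hDapp : (((EnvAux.mEquiv _ (hdet (βm m))).symm : (Fin p → ℝ) →L[ℝ] (Fin p → ℝ)))
      (Pi.single j 1) = (EnvAux.Hm b X (βm m))⁻¹ *ᵥ Pi.single j 1 := rfl
  rw [hDapp]
  have : ((EnvAux.Hm b X (βm m))⁻¹ *ᵥ Pi.single j 1) k = (EnvAux.Hm b X (βm m))⁻¹ k j := by
    simp [Matrix.mulVec, dotProduct, Pi.single_apply, mul_ite, Finset.sum_ite_eq']
  rw [this, show (EnvAux.Hm b X (βm m))⁻¹ k j = (EnvAux.Hm b X (βm m))⁻¹ᵀ j k from rfl, hinvT]
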